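/- For all formulas φ₁, φ₂, φ₃ of lexicographic logic and every truth assignment I, ⟦φ₁ ≫ (φ₂ ∧ φ₃)⟧(I) = ⟦(φ₁ ≫ φ₂) ∧ (φ₁ ≫ φ₃)⟧(I). -/

import Mathlib

/-- The three truth symbols F, 0 (Z), T. -/
inductive TSym : Type
  | F | Z | T
deriving DecidableEq

open TSym

/-- The operation u ≫ v on lists of symbols. -/
def lexOp (u v : List TSym) : List TSym :=
  if u = [F] ∧ v = [F] then [F]
  else if u = [T] ∧ v = [T] then [T]
  else Z :: (u ++ v)

/-- The truth domain 𝕍 as an inductive predicate. -/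
inductive Vmem : List TSym → Prop
  | F : Vmem [F]
  | T : Vmem [T]
  | op {u v : List TSym} : Vmem u → Vmem v → Vmem (lexOp u v)

def symRank : TSym → ℕ
  | F => 0 | Z => 1 | T => 2

/-- The order F < 0 < T on symbols. -/
def symLt (a b : TSym) : Prop := symRank a < symRank b

/-- Lexicographic order on lists induced by F < 0 < T. -/
def listLt (u v : List TSym) : Prop := List.Lex symLt u v

/-- Pointwise negation F ↦ T, T ↦ F, 0 ↦ 0. -/
def symNeg : TSym → TSym
  | F => T | T => F | Z => Z

def negList (v : List TSym) : List TSym := v.map symNeg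

def symVal : TSym → ℚ
  | F => -1 | Z => 0 | T => 1

/-- val([u₁,…,u_n]) = Σ symVal(u_i) · (1/3)^(i-1). -/
def val : List TSym → ℚ
  | [] => 0
  | a :: t => symVal a + val t / 3

open Classical in
/-- Lexicographic minimum. -/
noncomputable def minL (u v : List TSym) : List TSym := if listLt u v then u else v

open Classical in
/-- Lexicographic maximum. -/
noncomputable def maxL (u v : List TSym) : List TSym := if listLt u v then v else u

/-- Formulas of lexicographic logic. -/
inductive Formula (α : Type) : Type
  | atom : α → Formula α
  | and : Formula α → Formula α → Formula α
  | or : Formula α → Formula α → Formula α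
  | neg : Formula α → Formula α
  | lex : Formula α → Formula α → Formula α

/-- Semantics of lexicographic logic. -/
noncomputable def eval {α : Type} (I : α → List TSym) : Formula α → List TSym
  | Formula.atom a => I a
  | Formula.and φ ψ => minL (eval I φ) (eval I ψ)
  | Formula.or φ ψ => maxL (eval I φ) (eval I ψ)
  | Formula.neg φ => negList (eval I φ)
  | Formula.lex φ ψ => lexOp (eval I φ) (eval I ψ)

/-!
On `𝕍` the map `v ↦ u ≫ v` is strictly increasing, and a strictly increasing map
commutes with the minimum. Off the collapsed cases `u ≫ v = 0 :: (u ++ v)`, and prefixing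
preserves the lexicographic order; the collapsed values `[F]` and `[T]` are the least and the
greatest element of `𝕍`, because every element of `𝕍` is `[F]`, `[T]` or starts with `0`.
-/

instance : Std.Trichotomous symLt where
  trichotomous a b := by cases a <;> cases b <;> simp [symLt, symRank]

instance : Std.Asymm symLt where
  asymm a b := by cases a <;> cases b <;> simp [symLt, symRank]

instance : Std.Trichotomous listLt := inferInstanceAs (Std.Trichotomous (List.Lex symLt))

instance : Std.Asymm listLt := inferInstanceAs (Std.Asymm (List.Lex symLt))

theorem apply_minL_of_preserves_listLt {f : List TSym → List TSym} {u v : List TSym}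
    (huv : listLt u v → listLt (f u) (f v)) (hvu : listLt v u → listLt (f v) (f u)) :
    f (minL u v) = minL (f u) (f v) := by
  rcases trichotomous_of listLt u v with h | rfl | h
  · rw [minL, if_pos h, minL, if_pos (huv h)]
  · simp only [minL, ite_self]
  · rw [minL, if_neg (asymm h), minL, if_neg (asymm (hvu h))]

theorem eq_F_or_eq_T_or_eq_Z_cons_of_vmem {u : List TSym} (h : Vmem u) :
    u = [F] ∨ u = [T] ∨ ∃ t, u = Z :: t := by
  cases h with
  | F => exact .inl rfl
  | T => exact .inr (.inl rfl)
  | @op v w _ _ =>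
    unfold lexOp
    split_ifs
    exacts [.inl rfl, .inr (.inl rfl), .inr (.inr ⟨v ++ w, rfl⟩)]

theorem not_listLt_F_of_vmem {u : List TSym} (h : Vmem u) : ¬ listLt u [F] := by
  rcases eq_F_or_eq_T_or_eq_Z_cons_of_vmem h with rfl | rfl | ⟨t, rfl⟩ <;> intro hlt <;>
    cases hlt <;> simp_all [symLt, symRank]

theorem not_T_listLt_of_vmem {u : List TSym} (h : Vmem u) : ¬ listLt [T] u := by
  rcases eq_F_or_eq_T_or_eq_Z_cons_of_vmem h with rfl | rfl | ⟨t, rfl⟩ <;> intro hlt <;>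
    cases hlt <;> simp_all [symLt, symRank]

theorem listLt_lexOp_lexOp {u v w : List TSym} (hv : Vmem v) (hw : Vmem w)
    (h : listLt v w) : listLt (lexOp u v) (lexOp u w) := by
  have hv_ne_T : v ≠ [T] := by rintro rfl; exact not_T_listLt_of_vmem hw h
  have hw_ne_F : w ≠ [F] := by rintro rfl; exact not_listLt_F_of_vmem hv h
  unfold lexOp
  by_cases hFv : u = [F] ∧ v = [F]
  · have hu_ne_T : u ≠ [T] := by rw [hFv.1]; decide
    rw [if_pos hFv, if_neg (fun h => hw_ne_F h.2), if_neg (fun h => hu_ne_T h.1)]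
    exact .rel (by simp [symLt, symRank])
  · rw [if_neg hFv, if_neg (fun h => hv_ne_T h.2), if_neg (fun h => hw_ne_F h.2)]
    split_ifs
    · exact .rel (by simp [symLt, symRank])
    · exact .cons (.append_left _ h u)

theorem negList_involutive : Function.Involutive negList := fun u => by
  rw [negList, negList, List.map_map]
  exact List.map_id'' (fun a => by cases a <;> rfl) u

theorem negList_lexOp (u v : List TSym) :
    negList (lexOp u v) = lexOp (negList u) (negList v) := by
  have hF : ∀ x, negList x = [F] ↔ x = [T] := fun x =>
    (negList_involutive.injective.eq_iff' rfl)
  have hT : ∀ x, negList x = [T] ↔ x = [F] := fun x =>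
    (negList_involutive.injective.eq_iff' rfl)
  simp only [lexOp, hF, hT]
  split_ifs <;> simp_all [negList, symNeg]

theorem Vmem.negList {u : List TSym} (h : Vmem u) : Vmem (negList u) := by
  induction h with
  | F => exact .T
  | T => exact .F
  | op _ _ ihv ihw => exact negList_lexOp _ _ ▸ .op ihv ihw

theorem Vmem.minL {u v : List TSym} (hu : Vmem u) (hv : Vmem v) : Vmem (minL u v) := by
  unfold _root_.minL; split <;> assumption

theorem Vmem.maxL {u v : List TSym} (hu : Vmem u) (hv : Vmem v) : Vmem (maxL u v) := by
  unfold _root_.maxL; split <;> assumption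

theorem Vmem.eval {α : Type} {I : α → List TSym} (hI : ∀ a, Vmem (I a)) :
    ∀ φ : Formula α, Vmem (eval I φ)
  | .atom a => hI a
  | .and φ ψ => (Vmem.eval hI φ).minL (Vmem.eval hI ψ)
  | .or φ ψ => (Vmem.eval hI φ).maxL (Vmem.eval hI ψ)
  | .neg φ => (Vmem.eval hI φ).negList
  | .lex φ ψ => .op (Vmem.eval hI φ) (Vmem.eval hI ψ)

theorem lex_and_distrib {α : Type} (φ₁ φ₂ φ₃ : Formula α) (I : α → List TSym)
    (hI : ∀ a, Vmem (I a)) :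
    eval I (Formula.lex φ₁ (Formula.and φ₂ φ₃)) =
      eval I (Formula.and (Formula.lex φ₁ φ₂) (Formula.lex φ₁ φ₃)) :=
  have h₂ := Vmem.eval hI φ₂
  have h₃ := Vmem.eval hI φ₃
  apply_minL_of_preserves_listLt (listLt_lexOp_lexOp h₂ h₃) (listLt_lexOp_lexOp h₃ h₂)
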